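/- arXiv:2401.17577 — 3 statements merged into one kernel-verified Lean document; each statement's English description precedes it below -/
import Mathlib

section
/- Let (Ω, ℱ) be a measurable space, let π and ρ be probability measures on Ω with π absolutely continuous with respect to ρ, and let F : Ω → ℝ be a measurable function such that F is π-integrable and e^F is ρ-integrable. Then ∫_Ω F dπ − log ∫_Ω e^F dρ ≤ KL(π‖ρ). -/
open MeasureTheory Real ENNReal
open scoped Classical

/-- The Kullback–Leibler divergence `KL(q‖p)`, equal to `∫ log (dq/dp) dq` when `q` is
absolutely continuous with respect to `p` (and the integral is well defined),
and `+∞` otherwise. -/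
noncomputable def klDiv {Ω : Type*} [MeasurableSpace Ω] (q p : Measure Ω) : ℝ≥0∞ :=
  if q ≪ p ∧ Integrable (llr q p) q then ENNReal.ofReal (∫ x, llr q p x ∂q) else ⊤

/-!
Tilting `ρ` by `F` gives the probability measure `ρ_F = e^F ρ / ∫ e^F dρ`, with
`log (dπ/dρ_F) = log (dπ/dρ) - F + log ∫ e^F dρ`. Integrating against `π`, Gibbs' inequality
`0 ≤ ∫ log (dπ/dρ_F) dπ` is exactly the Donsker–Varadhan bound.
-/

section DonskerVaradhan

variable {Ω : Type*} [MeasurableSpace Ω]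

lemma integral_llr_nonneg (μ ν : Measure Ω) [IsProbabilityMeasure μ] [IsProbabilityMeasure ν]
    (hμν : μ ≪ ν) (h_int : Integrable (llr μ ν) μ) :
    0 ≤ ∫ x, llr μ ν x ∂μ := by
  simpa using InformationTheory.integral_llr_add_sub_measure_univ_nonneg hμν h_int

lemma integral_sub_log_integral_exp_le_integral_llr
    {μ ν : Measure Ω} [IsProbabilityMeasure μ] [IsProbabilityMeasure ν] (hμν : μ ≪ ν)
    (h_int : Integrable (llr μ ν) μ) {f : Ω → ℝ} (hfμ : Integrable f μ)
    (hfν : Integrable (fun x ↦ exp (f x)) ν) :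
    ∫ x, f x ∂μ - log (∫ x, exp (f x) ∂ν) ≤ ∫ x, llr μ ν x ∂μ := by
  have : IsProbabilityMeasure (ν.tilted f) := isProbabilityMeasure_tilted hfν
  have gibbs := integral_llr_nonneg μ (ν.tilted f)
    (hμν.trans (absolutelyContinuous_tilted hfν))
    (integrable_llr_tilted_right hμν hfμ h_int hfν)
  rw [integral_llr_tilted_right hμν hfμ hfν h_int] at gibbs
  linarith

end DonskerVaradhan

theorem donsker_varadhan_le_klDiv_general {Ω : Type*} [MeasurableSpace Ω]
    (P ρ : Measure Ω) [IsProbabilityMeasure P] [IsProbabilityMeasure ρ]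
    (hac : P ≪ ρ) (F : Ω → ℝ)
    (hFP : Integrable F P) (hFρ : Integrable (fun x => Real.exp (F x)) ρ) :
    ENNReal.ofReal (∫ x, F x ∂P - Real.log (∫ x, Real.exp (F x) ∂ρ)) ≤ klDiv P ρ := by
  by_cases h_int : Integrable (llr P ρ) P
  · rw [klDiv, if_pos ⟨hac, h_int⟩]
    exact ENNReal.ofReal_le_ofReal
      (integral_sub_log_integral_exp_le_integral_llr hac h_int hFP hFρ)
  · rw [klDiv, if_neg fun h ↦ h_int h.2]
    exact le_top

/-- **Donsker–Varadhan lower bound.** For probability measures `π ≪ ρ` on `Ω` and any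
measurable `F : Ω → ℝ` with `F` `π`-integrable and `e^F` `ρ`-integrable,
`∫ F dπ − log ∫ e^F dρ ≤ KL(π‖ρ)`. -/
theorem donsker_varadhan_le_klDiv {Ω : Type*} [MeasurableSpace Ω]
    (P ρ : Measure Ω) [IsProbabilityMeasure P] [IsProbabilityMeasure ρ]
    (hac : P ≪ ρ) (F : Ω → ℝ) (hF : Measurable F)
    (hFP : Integrable F P) (hFρ : Integrable (fun x => Real.exp (F x)) ρ) :
    ENNReal.ofReal (∫ x, F x ∂P - Real.log (∫ x, Real.exp (F x) ∂ρ)) ≤ klDiv P ρ :=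
  donsker_varadhan_le_klDiv_general P ρ hac F hFP hFρ
end

section
/- Let (S, 𝒮, μ) be a probability space of channel side information, (Ω, ℱ) a measurable space of hypothesis–sample pairs, p a probability measure on Ω, and s ↦ q_s a Markov kernel from S to Ω. Suppose the loss l : Ω → ℝ is σ-sub-Gaussian under p, is q_s-integrable for μ-almost every s, that each q_s is absolutely continuous with respect to p, that s ↦ KL(q_s‖p) is μ-integrable, and that s ↦ |E_{q_s}[l] − E_p[l]| is μ-integrable. Then the wireless risk discrepancy satisfies ∫_S |E_{q_s}[l] − E_p[l]| dμ(s) ≤ σ √(2 ∫_S KL(q_s‖p) dμ(s)). -/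
/-!
For each side-information value `s`, the Donsker–Varadhan inequality applied to
`λ (l - E_p l)`, combined with the sub-Gaussian bound on the log-moment generating function,
gives `λ Δ_s ≤ KL(κ s‖p) + λ²σ²/2` for every `λ`, hence `Δ_s² ≤ 2σ² KL(κ s‖p)`; when `σ = 0`
the loss is `p`-a.e. constant and `Δ_s = 0`. Integrating over `μ` and using
`∫ |Δ| dμ ≤ (∫ Δ² dμ)^{1/2}` for the probability measure `μ` gives the bound.
-/

open MeasureTheory Real ENNReal ProbabilityTheory
open scoped Classical

/-- A function `l : Ω → ℝ` is `σ`-sub-Gaussian under a probability measure `p` if it is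
`p`-integrable and for all `λ ∈ ℝ`, `log E_p[exp (λ (l − E_p[l]))] ≤ λ²σ²/2`
(the moment generating function being well defined). -/
def IsSubGaussian {Ω : Type*} [MeasurableSpace Ω] (p : Measure Ω) (σ : ℝ) (l : Ω → ℝ) : Prop :=
  0 ≤ σ ∧ Integrable l p ∧ ∀ lam : ℝ,
    Integrable (fun x => Real.exp (lam * (l x - ∫ y, l y ∂p))) p ∧
    Real.log (∫ x, Real.exp (lam * (l x - ∫ y, l y ∂p)) ∂p) ≤ lam ^ 2 * σ ^ 2 / 2

lemma sq_le_of_forall_mul_le_add_sq {x K v : ℝ} (hv : 0 < v)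
    (h : ∀ t : ℝ, t * x ≤ K + t ^ 2 * v / 2) : x ^ 2 ≤ 2 * v * K := by
  have := h (x / v)
  field_simp at this
  nlinarith

section LogLikelihoodRatio

variable {Ω : Type*} [MeasurableSpace Ω] {p q : Measure Ω}
  [IsProbabilityMeasure p] [IsProbabilityMeasure q]

lemma integral_llr_nonneg_s3 (hq : q ≪ p) (hllr : Integrable (llr q p) q) :
    0 ≤ ∫ x, llr q p x ∂q := by
  simpa using InformationTheory.integral_llr_add_sub_measure_univ_nonneg hq hllr

/-- The Donsker–Varadhan inequality, from Gibbs' inequality for `q` against `p` tilted by `f`. -/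
lemma integral_le_integral_llr_add_log_integral_exp {f : Ω → ℝ} (hq : q ≪ p)
    (hllr : Integrable (llr q p) q) (hfq : Integrable f q)
    (hfp : Integrable (fun x ↦ exp (f x)) p) :
    ∫ x, f x ∂q ≤ ∫ x, llr q p x ∂q + log (∫ x, exp (f x) ∂p) := by
  have : IsProbabilityMeasure (p.tilted f) := isProbabilityMeasure_tilted hfp
  have hgibbs := integral_llr_nonneg_s3 (hq.trans (absolutelyContinuous_tilted hfp))
    (integrable_llr_tilted_right hq hfq hllr hfp)
  rw [integral_llr_tilted_right hq hfq hfp hllr] at hgibbs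
  linarith

end LogLikelihoodRatio

namespace IsSubGaussian

variable {Ω : Type*} [MeasurableSpace Ω] {p q : Measure Ω}
  [IsProbabilityMeasure p] [IsProbabilityMeasure q] {σ : ℝ} {l : Ω → ℝ}

lemma mul_integral_sub_le (hsg : IsSubGaussian p σ l) (hq : q ≪ p)
    (hlq : Integrable l q) (hllr : Integrable (llr q p) q) (t : ℝ) :
    t * (∫ x, l x ∂q - ∫ x, l x ∂p) ≤ ∫ x, llr q p x ∂q + t ^ 2 * σ ^ 2 / 2 := by
  obtain ⟨-, -, hmgf⟩ := hsg
  have hdv := integral_le_integral_llr_add_log_integral_exp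
    (f := fun x ↦ t * (l x - ∫ y, l y ∂p)) hq hllr
    ((hlq.sub (integrable_const _)).const_mul t) (hmgf t).1
  rw [integral_const_mul, integral_sub hlq (integrable_const _), integral_const] at hdv
  simp only [probReal_univ, one_smul] at hdv
  linarith [(hmgf t).2]

lemma sq_integral_sub_le (hsg : IsSubGaussian p σ l) (hσ : 0 < σ) (hq : q ≪ p)
    (hlq : Integrable l q) (hllr : Integrable (llr q p) q) :
    (∫ x, l x ∂q - ∫ x, l x ∂p) ^ 2 ≤ 2 * σ ^ 2 * ∫ x, llr q p x ∂q :=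
  sq_le_of_forall_mul_le_add_sq (by positivity) fun t ↦ by
    simpa [mul_assoc] using hsg.mul_integral_sub_le hq hlq hllr t

/-- Since `exp y ≥ 1 + y` with equality only at `0`, the bound `E[exp (l - E l)] ≤ 1` forces
`l = E l` almost everywhere. -/
lemma ae_eq_integral_of_zero (hsg : IsSubGaussian p 0 l) :
    l =ᵐ[p] fun _ ↦ ∫ y, l y ∂p := by
  obtain ⟨-, hlp, hmgf⟩ := hsg
  set X : Ω → ℝ := fun x ↦ l x - ∫ y, l y ∂p with hX
  have hXint : Integrable X p := hlp.sub (integrable_const _)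
  have hexp : Integrable (fun x ↦ exp (X x)) p := by simpa using (hmgf 1).1
  have hexp_le : ∫ x, exp (X x) ∂p ≤ 1 := by
    refine (log_nonpos_iff (integral_exp_pos hexp).le).mp ?_
    simpa using (hmgf 1).2
  have hX0 : ∫ x, X x ∂p = 0 := by
    simp [hX, integral_sub hlp (integrable_const _)]
  have hg_nonneg : 0 ≤ fun x ↦ exp (X x) - (X x + 1) := fun x ↦ sub_nonneg.mpr (add_one_le_exp _)
  have hX1 : Integrable (fun x ↦ X x + 1) p := hXint.add (integrable_const 1)
  have hg_zero : (fun x ↦ exp (X x) - (X x + 1)) =ᵐ[p] 0 := by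
    refine (integral_eq_zero_iff_of_nonneg hg_nonneg (hexp.sub hX1)).mp
      (le_antisymm ?_ (integral_nonneg hg_nonneg))
    rw [integral_sub hexp hX1, integral_add hXint (integrable_const 1), hX0]
    simp only [integral_const, probReal_univ, one_smul]
    linarith
  filter_upwards [hg_zero] with x hx
  by_contra hne
  have := add_one_lt_exp (sub_ne_zero.mpr hne)
  simp only [Pi.zero_apply, sub_eq_zero] at hx
  linarith

lemma integral_eq_of_zero (hsg : IsSubGaussian p 0 l) (hq : q ≪ p) :
    ∫ x, l x ∂q = ∫ x, l x ∂p := by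
  simp [integral_congr_ae (hq.ae_le hsg.ae_eq_integral_of_zero)]

lemma ofReal_sq_integral_sub_le_klDiv (hsg : IsSubGaussian p σ l) (hq : q ≪ p)
    (hlq : Integrable l q) :
    ENNReal.ofReal ((∫ x, l x ∂q - ∫ x, l x ∂p) ^ 2) ≤ ENNReal.ofReal (2 * σ ^ 2) * klDiv q p := by
  -- for `σ = 0` the right side can be `0 * ⊤ = 0`, so that case needs `integral_eq_of_zero`
  obtain rfl | hσ := hsg.1.eq_or_lt
  · simp [hsg.integral_eq_of_zero hq]
  rw [klDiv]
  split_ifs with hkl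
  · rw [← ENNReal.ofReal_mul (by positivity)]
    exact ENNReal.ofReal_le_ofReal (hsg.sq_integral_sub_le hσ hq hlq hkl.2)
  · rw [ENNReal.mul_top (by positivity)]
    exact le_top

end IsSubGaussian

lemma integral_le_sqrt_of_ofReal_sq_le {S : Type*} [MeasurableSpace S] {μ : Measure S}
    [IsProbabilityMeasure μ] {f : S → ℝ} {F : S → ℝ≥0∞} (hf : AEStronglyMeasurable f μ)
    (hF : ∫⁻ s, F s ∂μ ≠ ⊤) (h : ∀ᵐ s ∂μ, ENNReal.ofReal (f s ^ 2) ≤ F s) :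
    ∫ s, f s ∂μ ≤ √(∫⁻ s, F s ∂μ).toReal := by
  have hL1_le_L2 : ∫⁻ s, ‖f s‖ₑ ∂μ ≤ (∫⁻ s, ‖f s‖ₑ ^ (2 : ℝ) ∂μ) ^ (1 / 2 : ℝ) := by
    simpa [eLpNorm'_eq_lintegral_enorm] using
      eLpNorm'_le_eLpNorm'_of_exponent_le one_pos one_le_two μ hf
  have hL2_le : ∫⁻ s, ‖f s‖ₑ ^ (2 : ℝ) ∂μ ≤ ∫⁻ s, F s ∂μ := by
    refine lintegral_mono_ae (h.mono fun s hs ↦ ?_)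
    rwa [enorm_eq_ofReal_abs, ENNReal.rpow_two, ← ENNReal.ofReal_pow (abs_nonneg _), sq_abs]
  calc ∫ s, f s ∂μ ≤ ∫ s, ‖f s‖ ∂μ := (le_abs_self _).trans (norm_integral_le_integral_norm f)
    _ = (∫⁻ s, ‖f s‖ₑ ∂μ).toReal := integral_norm_eq_lintegral_enorm hf
    _ ≤ ((∫⁻ s, F s ∂μ) ^ (1 / 2 : ℝ)).toReal :=
      ENNReal.toReal_mono (ENNReal.rpow_ne_top_of_nonneg (by norm_num) hF)
        (hL1_le_L2.trans (ENNReal.rpow_le_rpow hL2_le (by norm_num)))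
    _ = √(∫⁻ s, F s ∂μ).toReal := by rw [← ENNReal.toReal_rpow, sqrt_eq_rpow]

/-- **Upper bound on the wireless risk discrepancy.** Let `μ` be a probability measure on
the side-information space `S`, `p` a probability measure on the hypothesis–sample space
`Ω`, and `s ↦ κ s` a Markov kernel from `S` to `Ω`.  If the loss `l : Ω → ℝ` is
`σ`-sub-Gaussian under `p`, is `κ s`-integrable for `μ`-a.e. `s`, each `κ s` is absolutely
continuous w.r.t. `p`, `s ↦ KL(κ s‖p)` is `μ`-integrable (finite integral), and
`s ↦ |E_{κ s}[l] − E_p[l]|` is `μ`-integrable, then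
`∫ |E_{κ s}[l] − E_p[l]| dμ(s) ≤ σ √(2 ∫ KL(κ s‖p) dμ(s))`. -/
theorem wireless_risk_discrepancy_le {S Ω : Type*} [MeasurableSpace S] [MeasurableSpace Ω]
    (μ : Measure S) [IsProbabilityMeasure μ] (p : Measure Ω) [IsProbabilityMeasure p]
    (κ : Kernel S Ω) [IsMarkovKernel κ] (σ : ℝ) (l : Ω → ℝ)
    (hsg : IsSubGaussian p σ l)
    (hlint : ∀ᵐ s ∂μ, Integrable l (κ s))
    (hac : ∀ s, κ s ≪ p)
    (hklfin : ∫⁻ s, klDiv (κ s) p ∂μ ≠ ⊤)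
    (hdisc : Integrable (fun s => |∫ x, l x ∂(κ s) - ∫ x, l x ∂p|) μ) :
    ∫ s, |∫ x, l x ∂(κ s) - ∫ x, l x ∂p| ∂μ ≤
      σ * Real.sqrt (2 * (∫⁻ s, klDiv (κ s) p ∂μ).toReal) := by
  have hpointwise : ∀ᵐ s ∂μ, ENNReal.ofReal (|∫ x, l x ∂(κ s) - ∫ x, l x ∂p| ^ 2) ≤
      ENNReal.ofReal (2 * σ ^ 2) * klDiv (κ s) p :=
    hlint.mono fun s hs ↦ by
      simpa only [sq_abs] using hsg.ofReal_sq_integral_sub_le_klDiv (hac s) hs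
  have hfin : ∫⁻ s, ENNReal.ofReal (2 * σ ^ 2) * klDiv (κ s) p ∂μ ≠ ⊤ := by
    rw [lintegral_const_mul' _ _ ENNReal.ofReal_ne_top]
    exact ENNReal.mul_ne_top ENNReal.ofReal_ne_top hklfin
  calc ∫ s, |∫ x, l x ∂(κ s) - ∫ x, l x ∂p| ∂μ
      ≤ √(∫⁻ s, ENNReal.ofReal (2 * σ ^ 2) * klDiv (κ s) p ∂μ).toReal :=
        integral_le_sqrt_of_ofReal_sq_le hdisc.aestronglyMeasurable hfin hpointwise
    _ = σ * √(2 * (∫⁻ s, klDiv (κ s) p ∂μ).toReal) := by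
      rw [lintegral_const_mul' _ _ ENNReal.ofReal_ne_top, ENNReal.toReal_mul,
        ENNReal.toReal_ofReal (by positivity), mul_assoc, mul_left_comm, sqrt_mul (sq_nonneg σ),
        sqrt_sq hsg.1]
end

section
/- Let σ > 0, c > 0, D ≥ 0 and a ∈ ℝ. If for every λ with 0 < λ < 1/c one has λa − σ²λ²/(2(1 − cλ)) ≤ D, then a ≤ σ√(2D) + c·D. -/
/-! The substitution `λ = t / (σ + c t)`, `t > 0`, sweeps out `(0, 1/c)` and turns the hypothesis
into `a ≤ c D + σ (D / t + t / 2)`; minimizing over `t` (at `t = √(2D)`, or letting `t → 0` when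
`D = 0`) gives the bound. -/

theorem le_of_subGamma_ineq_at {σ c D a t : ℝ} (hσ : 0 < σ) (hc : 0 < c) (ht : 0 < t)
    (h : ∀ lam : ℝ, 0 < lam → lam < 1 / c →
      lam * a - σ ^ 2 * lam ^ 2 / (2 * (1 - c * lam)) ≤ D) :
    a ≤ c * D + σ * (D / t + t / 2) := by
  have hden : 0 < σ + c * t := by positivity
  have hlam_lt : t / (σ + c * t) < 1 / c := by
    rw [div_lt_div_iff₀ hden hc]
    linarith [mul_pos hσ ht]
  have key := mul_le_mul_of_nonneg_left (h _ (by positivity) hlam_lt) hden.le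
  have hsubst : (σ + c * t) * (t / (σ + c * t) * a
      - σ ^ 2 * (t / (σ + c * t)) ^ 2 / (2 * (1 - c * (t / (σ + c * t)))))
      = t * a - σ * t ^ 2 / 2 := by
    have hgap : 1 - c * (t / (σ + c * t)) = σ / (σ + c * t) := by
      field_simp
      ring
    rw [hgap]
    field_simp [hσ.ne']
  rw [hsubst] at key
  calc a = t * a / t := by field_simp
    _ ≤ ((σ + c * t) * D + σ * t ^ 2 / 2) / t := by gcongr; linarith
    _ = c * D + σ * (D / t + t / 2) := by field_simp; ring

theorem le_add_mul_sqrt_of_forall_pos {σ D a b : ℝ} (hσ : 0 < σ) (hD : 0 ≤ D)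
    (h : ∀ t, 0 < t → a ≤ b + σ * (D / t + t / 2)) :
    a ≤ b + σ * Real.sqrt (2 * D) := by
  rcases hD.eq_or_lt with rfl | hDpos
  · simp only [mul_zero, Real.sqrt_zero, add_zero]
    refine le_of_forall_pos_le_add fun ε hε => ?_
    calc a ≤ b + σ * (0 / (2 * ε / σ) + 2 * ε / σ / 2) := h _ (by positivity)
      _ = b + ε := by field_simp; ring
  · have hs : 0 < Real.sqrt (2 * D) := Real.sqrt_pos.mpr (by linarith)
    have hs2 := Real.sq_sqrt (by linarith : (0 : ℝ) ≤ 2 * D)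
    convert h _ hs using 3
    field_simp
    linarith

/-- **Sub-Gamma discriminant argument.** For `σ > 0`, `c > 0`, `D ≥ 0` and `a ∈ ℝ`: if
`λa − σ²λ²/(2(1 − cλ)) ≤ D` for every `λ` with `0 < λ < 1/c`, then
`a ≤ σ√(2D) + c·D`. -/
theorem le_sqrt_add_of_subGamma_ineq (σ c D a : ℝ) (hσ : 0 < σ) (hc : 0 < c)
    (hD : 0 ≤ D)
    (h : ∀ lam : ℝ, 0 < lam → lam < 1 / c →
      lam * a - σ ^ 2 * lam ^ 2 / (2 * (1 - c * lam)) ≤ D) :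
    a ≤ σ * Real.sqrt (2 * D) + c * D := by
  rw [add_comm]
  exact le_add_mul_sqrt_of_forall_pos hσ hD fun t ht => le_of_subGamma_ineq_at hσ hc ht h
end
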